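/- For A ∈ End(V) that is ω-skew-symmetric and commutes with each Ja (so A ∈ so*(2n)), the Ricci tensor Ric_A(y,z) := Tr{x ↦ R_A(x,y)z} of the curvature operator R_A equals 2(n+2)κ ω(Ay, z). -/

import Mathlib

/-!
Only four kinds of traces occur in `x ↦ R_A(x,y)z`: traces of rank-one maps, which are
evaluations of `ω`; the trace `4n` of the identity; and the traces of `A`, `Jₐ` and `JₐA`, which
all vanish. `A` is skew for the nondegenerate form `ω`, so it is conjugate to minus its
transpose; `Jₐ` and `JₐA` anticommute with some `J_b`, whose square is `-1`, which forces their
traces to be zero by cyclicity. The remaining evaluations of `ω` reduce to `±ω(Ay,z)` because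
`A` is `ω`-skew and commutes with the `Jₐ`, and the `Jₐ` preserve `ω`.
-/

/-- The curvature operator R_A(·,y)z as an endomorphism in the first argument x:
x ↦ R_A(x,y)z = κ ω(x,y) Az
  + (κ/2)(ω(x,z)Ay - Σₐ gₐ(x,z)JₐAy + ω(Ay,z)x - Σₐ gₐ(Ay,z)Jₐx)
  - (κ/2)(ω(y,z)Ax - Σₐ gₐ(y,z)JₐAx + ω(Ax,z)y - Σₐ gₐ(Ax,z)Jₐy)
  - (κ/2) Σₐ (gₐ(x,Ay) - gₐ(y,Ax)) Jₐz,
where gₐ(u,w) = ω(u, Jₐ w). -/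
noncomputable def curvOp {V : Type*} [AddCommGroup V] [Module ℝ V]
    (ω : LinearMap.BilinForm ℝ V) (J : Fin 3 → Module.End ℝ V)
    (A : Module.End ℝ V) (κ : ℝ) (y z : V) : Module.End ℝ V :=
  κ • ((ω.flip y).smulRight (A z))
  + (κ / 2) • ((ω.flip z).smulRight (A y)
      - ∑ a : Fin 3, (ω.flip (J a z)).smulRight (J a (A y))
      + ω (A y) z • (LinearMap.id : Module.End ℝ V)
      - ∑ a : Fin 3, ω (A y) (J a z) • J a)
  - (κ / 2) • (ω y z • A
      - ∑ a : Fin 3, ω y (J a z) • (J a * A)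
      + ((ω.flip z) ∘ₗ (A : V →ₗ[ℝ] V)).smulRight y
      - ∑ a : Fin 3, ((ω.flip (J a z)) ∘ₗ (A : V →ₗ[ℝ] V)).smulRight (J a y))
  - (κ / 2) • (∑ a : Fin 3,
      ((ω.flip (J a (A y))) - (ω y) ∘ₗ ((J a * A : Module.End ℝ V) : V →ₗ[ℝ] V)).smulRight
        (J a z))

open LinearMap

theorem LinearMap.trace_eq_zero_of_mul_self_eq_neg_one_of_anticomm {R M : Type*} [CommRing R]
    [IsAddTorsionFree R] [AddCommGroup M] [Module R M] {U X : Module.End R M}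
    (hU : U * U = -1) (hUX : U * X = -(X * U)) :
    trace R M X = 0 := by
  have hUXU : U * X * U = X := by
    rw [hUX, neg_mul, mul_assoc, hU, mul_neg_one, neg_neg]
  have h : trace R M X = -trace R M X :=
    calc trace R M X = trace R M (U * X * U) := by rw [hUXU]
      _ = trace R M (U * U * X) := by rw [trace_mul_cycle]
      _ = -trace R M X := by rw [hU, neg_one_mul, map_neg]
  exact self_eq_neg.mp h

theorem LinearMap.BilinForm.trace_eq_zero_of_apply_left_eq_neg_apply_right {K V : Type*}
    [Field K] [CharZero K] [AddCommGroup V] [Module K V] [FiniteDimensional K V]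
    {ω : LinearMap.BilinForm K V} (hω : ω.SeparatingLeft) {A : Module.End K V}
    (hA : ∀ x y, ω (A x) y = -ω x (A y)) :
    trace K V A = 0 := by
  let e := ω.toDual (.ofSeparatingLeft hω)
  have hconj : e.conj A = Module.Dual.transpose (-A) := by
    ext f v
    obtain ⟨x, rfl⟩ := e.surjective f
    simp [e, LinearEquiv.conj_apply, BilinForm.toDual_def, Module.Dual.transpose_apply, hA]
  have h := trace_conj' A e
  rw [hconj, trace_transpose', map_neg] at h
  exact self_eq_neg.mp h.symm

theorem exists_mul_eq_neg_mul_of_quaternionic {R : Type*} [Ring R] {J : Fin 3 → R}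
    (hJsq : ∀ a, J a * J a = -1) (hJJJ : J 0 * J 1 * J 2 = -1) :
    ∀ a, ∃ b, J b * J a = -(J a * J b) := by
  have h01 : J 0 * J 1 = J 2 := by
    have h := congrArg (· * J 2) hJJJ
    simpa [mul_assoc, hJsq] using h
  have h12 : J 1 * J 2 = J 0 := by
    have h := congrArg (J 0 * ·) hJJJ
    simpa [← mul_assoc, hJsq] using h
  have h10 : J 1 * J 0 = -J 2 := by
    rw [← h12, ← mul_assoc, hJsq, neg_one_mul]
  have h21 : J 2 * J 1 = -J 0 := by
    rw [← h01, mul_assoc, hJsq, mul_neg_one]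
  have h02 : J 0 * J 2 = -J 1 := by
    rw [← h01, ← mul_assoc, hJsq, neg_one_mul]
  have h20 : J 2 * J 0 = J 1 := by
    rw [← h12, ← mul_assoc, h21, neg_mul, h02, neg_neg]
  intro a
  match a with
  | 0 => exact ⟨1, by rw [h10, h01]⟩
  | 1 => exact ⟨0, by rw [h01, h10, neg_neg]⟩
  | 2 => exact ⟨0, by rw [h02, h20]⟩

theorem trace_mul_eq_zero_of_quaternionic {R M : Type*} [CommRing R] [IsAddTorsionFree R]
    [AddCommGroup M] [Module R M] {J : Fin 3 → Module.End R M}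
    (hJsq : ∀ a, J a * J a = -1) (hJJJ : J 0 * J 1 * J 2 = -1)
    {X : Module.End R M} (hX : ∀ a, X * J a = J a * X) (a : Fin 3) :
    trace R M (J a * X) = 0 := by
  obtain ⟨b, hb⟩ := exists_mul_eq_neg_mul_of_quaternionic hJsq hJJJ a
  refine trace_eq_zero_of_mul_self_eq_neg_one_of_anticomm (hJsq b) ?_
  rw [← mul_assoc, hb, neg_mul, mul_assoc, ← hX, mul_assoc]

theorem stmt8_general (V : Type*) [AddCommGroup V] [Module ℝ V] [FiniteDimensional ℝ V]
    (n : ℕ) (hdim : Module.finrank ℝ V = 4 * n)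
    (J : Fin 3 → Module.End ℝ V)
    (hJsq : ∀ a, J a * J a = -1)
    (hJJJ : J 0 * J 1 * J 2 = -1)
    (ω : LinearMap.BilinForm ℝ V)
    (hskew : ∀ x y, ω x y = - ω y x)
    (hnd : ∀ x, (∀ y, ω x y = 0) → x = 0)
    (hherm : ∀ (a : Fin 3) x y, ω (J a x) (J a y) = ω x y)
    (κ : ℝ)
    (A : Module.End ℝ V)
    (hAskew : ∀ x y, ω (A x) y = - ω x (A y))
    (hAcomm : ∀ a, A * J a = J a * A) :
    ∀ y z : V,
      LinearMap.trace ℝ V (curvOp ω J A κ y z) = 2 * ((n : ℝ) + 2) * κ * ω (A y) z := by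
  intro y z
  have htrA : trace ℝ V A = 0 :=
    BilinForm.trace_eq_zero_of_apply_left_eq_neg_apply_right hnd hAskew
  have htrJA a : trace ℝ V (J a * A) = 0 := trace_mul_eq_zero_of_quaternionic hJsq hJJJ hAcomm a
  have htrJ a : trace ℝ V (J a) = 0 := by
    simpa using trace_mul_eq_zero_of_quaternionic hJsq hJJJ (X := 1) (by simp) a
  have hAJ a x : A (J a x) = J a (A x) := congrArg (· x) (hAcomm a)
  have hJJ a x : J a (J a x) = -x := by simpa using congrArg (· x) (hJsq a)
  have hAzy : ω (A z) y = ω (A y) z := by rw [hAskew, hskew z, neg_neg]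
  have hyAz : ω y (A z) = -ω (A y) z := by rw [hAskew, neg_neg]
  have hzAy : ω z (A y) = -ω (A y) z := hskew z (A y)
  simp only [curvOp, map_add, map_sub, map_smul, map_neg, trace_smulRight, trace_id, htrA, htrJ,
    htrJA, BilinForm.flip_apply, comp_apply, LinearMap.sub_apply, Module.End.mul_apply, hAJ, hJJ,
    hherm, smul_eq_mul, mul_zero, hAzy, hyAz, hzAy, hdim, Fin.sum_univ_three]
  push_cast
  ring

theorem stmt8 (V : Type*) [AddCommGroup V] [Module ℝ V] [FiniteDimensional ℝ V]
    (n : ℕ) (hdim : Module.finrank ℝ V = 4 * n)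
    (J : Fin 3 → Module.End ℝ V)
    (hJsq : ∀ a, J a * J a = -1)
    (hJJJ : J 0 * J 1 * J 2 = -1)
    (ω : LinearMap.BilinForm ℝ V)
    (hskew : ∀ x y, ω x y = - ω y x)
    (hnd : ∀ x, (∀ y, ω x y = 0) → x = 0)
    (hherm : ∀ (a : Fin 3) x y, ω (J a x) (J a y) = ω x y)
    (κ : ℝ) (hκ : κ ≠ 0)
    (A : Module.End ℝ V)
    (hAskew : ∀ x y, ω (A x) y = - ω x (A y))
    (hAcomm : ∀ a, A * J a = J a * A) :
    ∀ y z : V,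
      LinearMap.trace ℝ V (curvOp ω J A κ y z) = 2 * ((n : ℝ) + 2) * κ * ω (A y) z :=
  stmt8_general V n hdim J hJsq hJJJ ω hskew hnd hherm κ A hAskew hAcomm
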